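/- arXiv:1711.03187 — 2 statements merged into one kernel-verified Lean document; each statement's English description precedes it below -/
import Mathlib

section
/- The function Q^3 is an eigenfunction of the linearized operator L with eigenvalue −8; that is, L(Q^3) = −(Q^3)'' + Q^3 − 5 Q^4 · Q^3 = −8 Q^3 pointwise on ℝ. Moreover Q^3 is positive, even, and satisfies |Q^3(x)| ≤ c e^{-δ_0 |x|} for some c, δ_0 > 0. -/
open MeasureTheory Real Filter

noncomputable section

/-- The ground state `Q(x) = 3^{1/4} (cosh 2x)^{-1/2}`, the unique positive even
`H¹` solution of `Q'' - Q + Q⁵ = 0`. -/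
def Q (x : ℝ) : ℝ := (3 : ℝ) ^ ((1 : ℝ)/4) * Real.cosh (2*x) ^ (-(1:ℝ)/2)

/-- The square of the `H¹(ℝ)` norm, `‖f‖_{H¹}² = ∫ (f² + (f')²)`. -/
def H1normSq (f : ℝ → ℝ) : ℝ := ∫ x, ((f x)^2 + (deriv f x)^2)

/-- Membership in `H¹(ℝ)` (modeled via `L²` membership of `f` and of its derivative). -/
def inH1 (f : ℝ → ℝ) : Prop := MemLp f 2 volume ∧ MemLp (deriv f) 2 volume

/-- The linearized operator around `Q`: `Lf = -f'' + f - 5 Q⁴ f`. -/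
def Lop (f : ℝ → ℝ) (x : ℝ) : ℝ := -(deriv (deriv f) x) + f x - 5 * (Q x)^4 * f x

/-- The generator of the scaling symmetry: `Λf = (1/2) f + y f'`. -/
def Lam (f : ℝ → ℝ) (y : ℝ) : ℝ := (1/2) * f y + y * deriv f y

/-- The higher-order remainder `R(ε) = 10 Q³ ε² + 10 Q² ε³ + 5 Q ε⁴ + ε⁵`. -/
def Rrem (f : ℝ → ℝ) (y : ℝ) : ℝ :=
  10 * (Q y)^3 * (f y)^2 + 10 * (Q y)^2 * (f y)^3 + 5 * Q y * (f y)^4 + (f y)^5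

/-
With `c = cosh 2x` one has `Q⁴ = 3 c⁻²` and `Q³ = 3^{3/4} c^{-3/2}`. For `g = cosh (a x)` and any
real `p`, the identity `sinh² = cosh² - 1` gives `(g^p)'' = a² (p² g^p - p (p - 1) g^{p-2})`,
so `(Q³)'' = 3^{3/4} (9 c^{-3/2} - 15 c^{-7/2})`, and the `c^{-7/2}` term cancels against
`5 Q⁴ Q³ = 15 · 3^{3/4} c^{-7/2}`. Decay follows from `cosh x ≥ e^{|x|} / 2`.
-/

lemma Q_pow (n : ℕ) (x : ℝ) :
    Q x ^ n = (3 : ℝ) ^ ((n : ℝ) / 4) * cosh (2 * x) ^ (-(n : ℝ) / 2) := by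
  rw [Q, mul_pow, ← rpow_natCast ((3 : ℝ) ^ _), ← rpow_mul (by norm_num),
    ← rpow_natCast (cosh (2 * x) ^ _), ← rpow_mul (cosh_pos _).le]
  ring_nf

lemma Q_pos (x : ℝ) : 0 < Q x :=
  mul_pos (rpow_pos_of_pos (by norm_num) _) (rpow_pos_of_pos (cosh_pos _) _)

lemma Q_neg (x : ℝ) : Q (-x) = Q x := by
  rw [Q, Q, mul_neg, cosh_neg]

lemma hasDerivAt_cosh_mul (a x : ℝ) :
    HasDerivAt (fun y => cosh (a * y)) (a * sinh (a * x)) x := by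
  simpa [mul_comm] using ((hasDerivAt_id x).const_mul a).cosh

lemma hasDerivAt_sinh_mul (a x : ℝ) :
    HasDerivAt (fun y => sinh (a * y)) (a * cosh (a * x)) x := by
  simpa [mul_comm] using ((hasDerivAt_id x).const_mul a).sinh

lemma hasDerivAt_cosh_mul_rpow (a p x : ℝ) :
    HasDerivAt (fun y => cosh (a * y) ^ p) (p * a * (sinh (a * x) * cosh (a * x) ^ (p - 1))) x := by
  convert (hasDerivAt_cosh_mul a x).rpow_const (Or.inl (cosh_pos _).ne') using 1
  ring

lemma deriv_deriv_cosh_mul_rpow (a p x : ℝ) :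
    deriv (deriv fun y => cosh (a * y) ^ p) x
      = a ^ 2 * (p ^ 2 * cosh (a * x) ^ p - p * (p - 1) * cosh (a * x) ^ (p - 2)) := by
  have hc := cosh_pos (a * x)
  have hd : (deriv fun y => cosh (a * y) ^ p)
      = fun y => p * a * (sinh (a * y) * cosh (a * y) ^ (p - 1)) :=
    funext fun y => (hasDerivAt_cosh_mul_rpow a p y).deriv
  have h2 : HasDerivAt (fun y => p * a * (sinh (a * y) * cosh (a * y) ^ (p - 1))) _ x :=
    ((hasDerivAt_sinh_mul a x).mul (hasDerivAt_cosh_mul_rpow a (p - 1) x)).const_mul (p * a)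
  rw [hd, h2.deriv, show p - 1 - 1 = p - 2 by ring]
  have hsq : sinh (a * x) ^ 2 = cosh (a * x) ^ 2 - 1 := by
    linarith [cosh_sq (a * x)]
  have e1 : cosh (a * x) * cosh (a * x) ^ (p - 1) = cosh (a * x) ^ p := by
    rw [mul_comm, ← rpow_add_one hc.ne']; ring_nf
  have e2 : cosh (a * x) ^ 2 * cosh (a * x) ^ (p - 2) = cosh (a * x) ^ p := by
    rw [← rpow_natCast, ← rpow_add hc]; ring_nf
  linear_combination (p * a ^ 2) * e1 + (p * (p - 1) * a ^ 2 * cosh (a * x) ^ (p - 2)) * hsq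
    + (p * (p - 1) * a ^ 2) * e2

lemma Lop_Q_pow_three (x : ℝ) : Lop (fun y => Q y ^ 3) x = -8 * Q x ^ 3 := by
  have hQ3 : (fun y => Q y ^ 3) = fun y => (3 : ℝ) ^ ((3 : ℝ) / 4) * cosh (2 * y) ^ (-(3 : ℝ) / 2) :=
    funext fun y => by rw [Q_pow]; norm_num
  have hc := cosh_pos (2 * x)
  have hQ4 : Q x ^ 4 = 3 * cosh (2 * x) ^ (-(2 : ℝ)) := by
    rw [Q_pow]; norm_num
  have e : cosh (2 * x) ^ (-(2 : ℝ)) * cosh (2 * x) ^ (-(3 : ℝ) / 2)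
      = cosh (2 * x) ^ (-(3 : ℝ) / 2 - 2) := by
    rw [← rpow_add hc]; ring_nf
  simp only [Lop, congrFun hQ3 x, hQ3, deriv_const_mul_field', deriv_deriv_cosh_mul_rpow, hQ4]
  linear_combination (-15 * (3 : ℝ) ^ ((3 : ℝ) / 4)) * e

lemma cosh_rpow_le_of_nonpos {p : ℝ} (hp : p ≤ 0) (x : ℝ) : cosh x ^ p ≤ 2 ^ (-p) * exp (p * |x|) := by
  have hle : exp |x| / 2 ≤ cosh x := by
    rw [← cosh_abs, cosh_eq]; linarith [exp_pos (-|x|)]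
  calc cosh x ^ p ≤ (exp |x| / 2) ^ p := rpow_le_rpow_of_nonpos (by positivity) hle hp
    _ = 2 ^ (-p) * exp (p * |x|) := by
      rw [div_rpow (exp_nonneg _) zero_le_two, ← exp_mul, rpow_neg zero_le_two, mul_comm |x| p]
      ring

lemma Q_pow_le (n : ℕ) (x : ℝ) :
    Q x ^ n ≤ (3 : ℝ) ^ ((n : ℝ) / 4) * 2 ^ ((n : ℝ) / 2) * exp (-n * |x|) := by
  have hn : -((n : ℝ) / 2) ≤ 0 := by simp only [neg_nonpos]; positivity
  have hexp : -((n : ℝ) / 2) * |2 * x| = -n * |x| := by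
    rw [abs_mul, abs_two]; ring
  rw [Q_pow, mul_assoc, neg_div]
  gcongr
  simpa only [hexp, neg_neg] using cosh_rpow_le_of_nonpos hn (2 * x)

/-- **`Q³` is an eigenfunction of `L` with eigenvalue `-8`:**
`L(Q³) = -(Q³)'' + Q³ - 5 Q⁴ · Q³ = -8 Q³` pointwise on `ℝ`. Moreover `Q³` is
positive, even, and exponentially decaying. -/
theorem Qcubed_eigenfunction :
    (∀ x : ℝ, -(deriv (deriv fun y => (Q y)^3) x) + (Q x)^3 - 5 * (Q x)^4 * (Q x)^3
        = -8 * (Q x)^3) ∧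
    (∀ x : ℝ, 0 < (Q x)^3) ∧
    (∀ x : ℝ, (Q (-x))^3 = (Q x)^3) ∧
    (∃ c δ₀ : ℝ, 0 < c ∧ 0 < δ₀ ∧ ∀ x : ℝ, |(Q x)^3| ≤ c * Real.exp (-δ₀ * |x|)) := by
  refine ⟨Lop_Q_pow_three, fun x => pow_pos (Q_pos x) 3, fun x => by rw [Q_neg],
    (3 : ℝ) ^ ((3 : ℝ) / 4) * 2 ^ ((3 : ℝ) / 2), 3, by positivity, three_pos, fun x => ?_⟩
  rw [abs_of_pos (pow_pos (Q_pos x) 3)]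
  exact_mod_cast Q_pow_le 3 x
end
end

section
/- (L^2 exponential decay on the right for ε) Let M ≥ max{4, 1/δ}. Let u be a solution of the critical gKdV equation satisfying, for some C^1 functions λ(s) with 1/2 ≤ λ(s) ≤ 3/2 and x(s), the decomposition ε(s, y) = λ^{1/2}(s) u(t(s), λ(s) y + x(s)) − Q(y), and suppose the right-tail mass bound ∫_{x > x_0} u^2(t, x + x(t)) dx ≤ C' e^{-x_0/M} holds for all t ≥ 0 and x_0 > 0. Then there exists C = C(M, δ) > 0 such that for every s ≥ 0 and every y_0 > 0: ∫_{y > y_0} ε^2(s, y) dy ≤ C e^{-y_0/(2M)}. -/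
open MeasureTheory Real Filter

noncomputable section

/-- `u` is a (classical) solution of the critical gKdV equation
`u_t + u_{xxx} + (u⁵)_x = 0`, of class `C¹` in `t` and `C³` in `x`. -/
def isGKdVSolution (u : ℝ → ℝ → ℝ) : Prop :=
  (∀ x, ContDiff ℝ 1 fun t => u t x) ∧
  (∀ t, ContDiff ℝ 3 fun x => u t x) ∧
  ∀ t x, deriv (fun τ => u τ x) t
      + deriv (deriv (deriv (u t))) x
      + deriv (fun z => (u t z) ^ 5) x = 0

/-- `u(t,·)` together with its first three spatial derivatives decays to `0` at
spatial infinity, for every time `t`. -/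
def decaysAtInfinity (u : ℝ → ℝ → ℝ) : Prop :=
  ∀ t, Tendsto (u t) (cocompact ℝ) (nhds 0) ∧
       Tendsto (deriv (u t)) (cocompact ℝ) (nhds 0) ∧
       Tendsto (deriv (deriv (u t))) (cocompact ℝ) (nhds 0) ∧
       Tendsto (deriv (deriv (deriv (u t)))) (cocompact ℝ) (nhds 0)

/-! Write `ε(s, y) = a(y) - Q(y)` with `a(y) = λ^{1/2} u(t, λ y + x)`. After the substitution
`x = λ y`, the tail of `a²` beyond `y₀` is the tail of `u²` beyond `λ y₀ ≥ y₀ / 2`, hence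
`O(e^{-y₀/(2M)})`; the tail of `Q² = √3 / cosh 2y` is `O(e^{-2y₀})`. Conclude with
`(a - Q)² ≤ 2a² + 2Q²`. -/

lemma Q_sq (y : ℝ) : Q y ^ 2 = √3 / Real.cosh (2 * y) := by
  have hc : 0 < Real.cosh (2 * y) := Real.cosh_pos _
  rw [Q, mul_pow, ← Real.rpow_natCast, ← Real.rpow_natCast, ← Real.rpow_mul (by norm_num),
    ← Real.rpow_mul hc.le, Real.sqrt_eq_rpow]
  norm_num [Real.rpow_neg_one, div_eq_mul_inv]

lemma Q_sq_le (y : ℝ) : Q y ^ 2 ≤ 2 * √3 * Real.exp (-2 * y) := by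
  have hcosh : Real.exp (2 * y) / 2 ≤ Real.cosh (2 * y) := by
    rw [Real.cosh_eq]
    linarith [Real.exp_pos (-(2 * y))]
  rw [Q_sq, div_le_iff₀ (Real.cosh_pos _)]
  calc √3 = 2 * √3 * Real.exp (-2 * y) * (Real.exp (2 * y) / 2) := by
        rw [neg_mul, Real.exp_neg]; field_simp
    _ ≤ 2 * √3 * Real.exp (-2 * y) * Real.cosh (2 * y) := by gcongr

lemma continuous_Q : Continuous Q :=
  continuous_const.mul ((Real.continuous_cosh.comp (continuous_const.mul continuous_id)).rpow_const
    fun _ => Or.inl (Real.cosh_pos _).ne')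

lemma integrableOn_Q_sq_Ioi (y₀ : ℝ) : IntegrableOn (fun y => Q y ^ 2) (Set.Ioi y₀) := by
  refine ((integrableOn_exp_mul_Ioi (by norm_num : (-2 : ℝ) < 0) y₀).const_mul (2 * √3)).mono'
    (continuous_Q.pow 2).aestronglyMeasurable.restrict (Eventually.of_forall fun y => ?_)
  rw [Real.norm_of_nonneg (sq_nonneg _)]
  exact Q_sq_le y

lemma memLp_Q_restrict_Ioi (y₀ : ℝ) : MemLp Q 2 (volume.restrict (Set.Ioi y₀)) :=
  (memLp_two_iff_integrable_sq continuous_Q.aestronglyMeasurable).2 (integrableOn_Q_sq_Ioi y₀)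

lemma setIntegral_Q_sq_Ioi_le (y₀ : ℝ) : ∫ y in Set.Ioi y₀, Q y ^ 2 ≤ √3 * Real.exp (-2 * y₀) :=
  calc ∫ y in Set.Ioi y₀, Q y ^ 2 ≤ ∫ y in Set.Ioi y₀, 2 * √3 * Real.exp (-2 * y) :=
        setIntegral_mono (integrableOn_Q_sq_Ioi y₀)
          ((integrableOn_exp_mul_Ioi (by norm_num) y₀).const_mul _) Q_sq_le
    _ = √3 * Real.exp (-2 * y₀) := by
        rw [integral_const_mul, integral_exp_mul_Ioi (by norm_num)]; ring

lemma integral_sub_sq_le {α : Type*} [MeasurableSpace α] {μ : Measure α} {f g : α → ℝ}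
    (hf : AEStronglyMeasurable f μ) (hg : MemLp g 2 μ) :
    ∫ x, (f x - g x) ^ 2 ∂μ ≤ 2 * ∫ x, f x ^ 2 ∂μ + 2 * ∫ x, g x ^ 2 ∂μ := by
  by_cases hf2 : Integrable (fun x => f x ^ 2) μ
  · have hf' : MemLp f 2 μ := (memLp_two_iff_integrable_sq hf).2 hf2
    rw [← integral_const_mul, ← integral_const_mul, ← integral_add (hf2.const_mul 2)
      (hg.integrable_sq.const_mul 2)]
    refine integral_mono (hf'.sub hg).integrable_sq
      ((hf2.const_mul 2).add (hg.integrable_sq.const_mul 2)) fun x => ?_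
    nlinarith [sq_nonneg (f x + g x)]
  · -- `f = (f - g) + g` would be in `L²`
    have hfg : ¬ Integrable (fun x => (f x - g x) ^ 2) μ := fun h => hf2 <| by
      simpa using (((memLp_two_iff_integrable_sq (hf.sub hg.1)).2 h).add hg).integrable_sq
    rw [integral_undef hfg, integral_undef hf2]
    have : 0 ≤ ∫ x, g x ^ 2 ∂μ := by positivity
    linarith

lemma setIntegral_sq_rescale_Ioi (f : ℝ → ℝ) {c : ℝ} (hc : 0 < c) (b y₀ : ℝ) :
    ∫ y in Set.Ioi y₀, (√c * f (c * y + b)) ^ 2 = ∫ x in Set.Ioi (c * y₀), f (x + b) ^ 2 := by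
  simp_rw [mul_pow, Real.sq_sqrt hc.le]
  rw [integral_const_mul, integral_comp_mul_left_Ioi (fun x => f (x + b) ^ 2) y₀ hc, smul_eq_mul,
    mul_inv_cancel_left₀ hc.ne']

theorem eps_L2_exponential_decay_right_general (δ M C' : ℝ)
    (hM : max 4 (1/δ) ≤ M) (hC' : 0 < C') :
    ∃ C > 0,
      ∀ (u ε : ℝ → ℝ → ℝ) (lam xc tOf : ℝ → ℝ),
        isGKdVSolution u → decaysAtInfinity u →
        ContDiff ℝ 1 lam → ContDiff ℝ 1 xc →
        (∀ s, 1/2 ≤ lam s ∧ lam s ≤ 3/2) →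
        (∀ s y, ε s y = Real.sqrt (lam s) * u (tOf s) (lam s * y + xc s) - Q y) →
        (∀ s : ℝ, 0 ≤ s → ∀ x₀ : ℝ, 0 < x₀ →
          (∫ x in Set.Ioi x₀, (u (tOf s) (x + xc s))^2) ≤ C' * Real.exp (-x₀ / M)) →
        ∀ s : ℝ, 0 ≤ s → ∀ y₀ : ℝ, 0 < y₀ →
          (∫ y in Set.Ioi y₀, (ε s y)^2) ≤ C * Real.exp (-y₀ / (2*M)) := by
  have hM4 : 4 ≤ M := (le_max_left _ _).trans hM
  refine ⟨2 * C' + 2 * √3, by positivity, ?_⟩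
  intro u ε lam xc tOf hsol _ _ _ hlam hε htail s hs y₀ hy₀
  obtain ⟨hlam_ge, -⟩ := hlam s
  have hlam_pos : 0 < lam s := by linarith
  have hexp_u : -(lam s * y₀) / M ≤ -y₀ / (2 * M) := by
    rw [div_le_div_iff₀ (by positivity) (by positivity)]
    nlinarith [mul_le_mul_of_nonneg_right hlam_ge (by positivity : 0 ≤ y₀ * M)]
  have hexp_Q : -2 * y₀ ≤ -y₀ / (2 * M) := by
    rw [le_div_iff₀ (by positivity)]; nlinarith
  set E := Real.exp (-y₀ / (2 * M))
  have hu_tail : ∫ y in Set.Ioi y₀, (√(lam s) * u (tOf s) (lam s * y + xc s)) ^ 2 ≤ C' * E := by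
    rw [setIntegral_sq_rescale_Ioi _ hlam_pos]
    exact (htail s hs _ (by positivity)).trans
      (mul_le_mul_of_nonneg_left (Real.exp_le_exp.2 hexp_u) hC'.le)
  have hQ_tail : ∫ y in Set.Ioi y₀, Q y ^ 2 ≤ √3 * E :=
    (setIntegral_Q_sq_Ioi_le y₀).trans
      (mul_le_mul_of_nonneg_left (Real.exp_le_exp.2 hexp_Q) (Real.sqrt_nonneg 3))
  have hu_cont : Continuous (u (tOf s)) := (hsol.2.1 (tOf s)).continuous
  calc ∫ y in Set.Ioi y₀, ε s y ^ 2
      = ∫ y in Set.Ioi y₀, (√(lam s) * u (tOf s) (lam s * y + xc s) - Q y) ^ 2 := by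
        simp_rw [hε]
    _ ≤ 2 * (C' * E) + 2 * (√3 * E) := by
        refine (integral_sub_sq_le (by fun_prop) (memLp_Q_restrict_Ioi y₀)).trans ?_
        linarith
    _ = (2 * C' + 2 * √3) * E := by ring

/-- **`L²` exponential decay on the right for `ε`.** Let `δ > 0`, `M ≥ max{4, 1/δ}`,
`C' > 0`. There exists `C = C(M, δ) > 0` such that for any solution `u` of the
critical gKdV equation decomposed as `ε(s,y) = λ^{1/2}(s) u(t(s), λ(s) y + x(s)) - Q(y)`
with `C¹` functions `1/2 ≤ λ(s) ≤ 3/2` and `x(s)`, if the right-tail mass bound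
`∫_{x > x₀} u²(t(s), x + x(s)) dx ≤ C' e^{-x₀/M}` holds for all `s ≥ 0`, `x₀ > 0`,
then for every `s ≥ 0` and `y₀ > 0`: `∫_{y > y₀} ε²(s,y) dy ≤ C e^{-y₀/(2M)}`. -/
theorem eps_L2_exponential_decay_right (δ M C' : ℝ) (hδ : 0 < δ)
    (hM : max 4 (1/δ) ≤ M) (hC' : 0 < C') :
    ∃ C > 0,
      ∀ (u ε : ℝ → ℝ → ℝ) (lam xc tOf : ℝ → ℝ),
        isGKdVSolution u → decaysAtInfinity u →
        ContDiff ℝ 1 lam → ContDiff ℝ 1 xc →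
        (∀ s, 1/2 ≤ lam s ∧ lam s ≤ 3/2) →
        (∀ s y, ε s y = Real.sqrt (lam s) * u (tOf s) (lam s * y + xc s) - Q y) →
        (∀ s : ℝ, 0 ≤ s → ∀ x₀ : ℝ, 0 < x₀ →
          (∫ x in Set.Ioi x₀, (u (tOf s) (x + xc s))^2) ≤ C' * Real.exp (-x₀ / M)) →
        ∀ s : ℝ, 0 ≤ s → ∀ y₀ : ℝ, 0 < y₀ →
          (∫ y in Set.Ioi y₀, (ε s y)^2) ≤ C * Real.exp (-y₀ / (2*M)) :=
  eps_L2_exponential_decay_right_general δ M C' hM hC'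
end
end
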